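/- Let K ≥ 1, let u be a continuously differentiable map from an open neighborhood of the closed unit disk D̄ into ℝ^K, and let α be real with 1 < α ≤ 2. Suppose ∫_D ( −(1 + |∇u(z)|²)^α + 1 + α(1 + |∇u(z)|²)^{α−1}|∇u(z)|² )·Im(z) dA(z) = 0. Then, writing D⁺ = {z ∈ D : Im z > 0} and D⁻ = {z ∈ D : Im z < 0}, one has (α/2)·∫_{D⁺} (1 + |∇u(z)|²)^{α−2}|∇u(z)|⁴·Im(z) dA(z) ≤ −∫_{D⁻} (1 + |∇u(z)|²)^{α−2}|∇u(z)|⁴·Im(z) dA(z). -/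

import Mathlib

/-!
Write `t = 1 + s` and `β = 2 - α ∈ [0, 1)`. The Sacks–Uhlenbeck defect
`-(1 + s)^α + 1 + α (1 + s)^(α-1) s` equals `(-t² + t^β + α t s) t^(-β)`, so the two-sided bound
reduces to the Bernoulli-type estimates `1 + β s + β(β-1)/2 s² ≤ (1 + s)^β ≤ 1 + β s`.
Multiplying the lower bound by `Im z > 0` on `D⁺`, the upper bound by `Im z < 0` on `D⁻`, and
integrating (the real axis is Lebesgue-null) turns the vanishing of the integral of the defect
into the claimed inequality, after dividing by `α - 1 > 0`.
-/

/-- `|∇u(z)|² = |∂u/∂x(z)|² + |∂u/∂y(z)|²` for a map `u : ℂ → ℝ^K`,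
identifying `ℂ` with `ℝ²` via `z = x + iy`. -/
noncomputable def gradSq {K : ℕ} (u : ℂ → EuclideanSpace ℝ (Fin K)) (z : ℂ) : ℝ :=
  ‖fderiv ℝ u z 1‖ ^ 2 + ‖fderiv ℝ u z Complex.I‖ ^ 2

open MeasureTheory

lemma one_sub_mul_le_rpow_neg_one_add {q s : ℝ} (hq0 : 0 ≤ q) (hq1 : q ≤ 1) (hs : -1 < s) :
    1 - q * s ≤ (1 + s) ^ (-q) := by
  have hpos : 0 < 1 + s := by linarith
  have hqs : 0 < 1 + q * s := by
    rcases le_or_gt 0 s with hs0 | hs0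
    · positivity
    · nlinarith
  calc 1 - q * s ≤ (1 + q * s)⁻¹ := by
        rw [inv_eq_one_div, le_div_iff₀ hqs]
        nlinarith [sq_nonneg (q * s)]
    _ ≤ ((1 + s) ^ q)⁻¹ :=
        inv_anti₀ (Real.rpow_pos_of_pos hpos q) (rpow_one_add_le_one_add_mul_self hs.le hq0 hq1)
    _ = (1 + s) ^ (-q) := (Real.rpow_neg hpos.le q).symm

lemma one_add_mul_self_add_mul_sq_le_rpow_one_add {β s : ℝ} (hβ0 : 0 ≤ β) (hβ1 : β ≤ 1)
    (hs : 0 ≤ s) : 1 + β * s + β * (β - 1) / 2 * s ^ 2 ≤ (1 + s) ^ β := by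
  set φ : ℝ → ℝ := fun x ↦ (1 + x) ^ β - (1 + β * x + β * (β - 1) / 2 * x ^ 2)
  have hφ_deriv : ∀ x, 0 ≤ x → HasDerivAt φ (β * ((1 + x) ^ (β - 1) - (1 + (β - 1) * x))) x := by
    intro x hx
    have hpow := ((hasDerivAt_id x).const_add 1).rpow_const (p := β)
      (Or.inl (by simp only [id]; linarith))
    have hpoly := (((hasDerivAt_id x).const_mul β).const_add 1).add
      ((hasDerivAt_pow 2 x).const_mul (β * (β - 1) / 2))
    exact (hpow.sub hpoly).congr_deriv (by simp only [id]; push_cast; ring)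
  have hφ_deriv_nonneg : ∀ x, 0 ≤ x → 0 ≤ β * ((1 + x) ^ (β - 1) - (1 + (β - 1) * x)) := by
    intro x hx
    have := one_sub_mul_le_rpow_neg_one_add (q := 1 - β) (by linarith) (by linarith)
      (by linarith : -1 < x)
    rw [neg_sub] at this
    exact mul_nonneg hβ0 (by linarith)
  have hmono : MonotoneOn φ (Set.Ici 0) := by
    refine monotoneOn_of_hasDerivWithinAt_nonneg (convex_Ici 0)
      (fun x hx ↦ (hφ_deriv x hx).continuousAt.continuousWithinAt) (fun x hx ↦ ?_)
      (fun x hx ↦ hφ_deriv_nonneg x (interior_subset hx))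
    exact (hφ_deriv x (interior_subset hx)).hasDerivWithinAt
  have := hmono Set.self_mem_Ici (Set.mem_Ici.2 hs) hs
  simpa [φ] using this

lemma setIntegral_eq_add_setIntegral_pos_neg {X E : Type*} [MeasurableSpace X]
    [NormedAddCommGroup E] [NormedSpace ℝ E] {μ : Measure X} {s : Set X} {f : X → E}
    {w : X → ℝ} (hs : MeasurableSet s) (hw : Measurable w) (hw0 : μ {x | w x = 0} = 0)
    (hf : IntegrableOn f s μ) :
    ∫ x in s, f x ∂μ = ∫ x in {x ∈ s | 0 < w x}, f x ∂μ + ∫ x in {x ∈ s | w x < 0}, f x ∂μ := by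
  have hae : s =ᵐ[μ] ({x ∈ s | 0 < w x} ∪ {x ∈ s | w x < 0} : Set X) := by
    refine Filter.eventuallyEq_set.2 ?_
    filter_upwards [measure_eq_zero_iff_ae_notMem.1 hw0] with x hx
    have := lt_or_gt_of_ne (hx : w x ≠ 0)
    simp only [Set.mem_union, Set.mem_ofPred_eq]
    tauto
  have hdisj : Disjoint {x ∈ s | 0 < w x} {x ∈ s | w x < 0} :=
    Set.disjoint_left.2 fun x h₁ h₂ ↦ h₁.2.not_gt h₂.2
  rw [setIntegral_congr_set hae, setIntegral_union hdisj
    (hs.inter (measurableSet_lt hw measurable_const)) (hf.mono_set fun x hx ↦ hx.1)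
    (hf.mono_set fun x hx ↦ hx.1)]

lemma Complex.volume_setOf_im_eq_zero : volume {z : ℂ | z.im = 0} = 0 := by
  have : {z : ℂ | z.im = 0} = Complex.measurableEquivRealProd ⁻¹' (Set.univ ×ˢ {0}) := by
    ext z; simp [Complex.measurableEquivRealProd]
  rw [this, Complex.volume_preserving_equiv_real_prod.measure_preimage_equiv,
    Measure.volume_eq_prod, Measure.prod_prod, Real.volume_singleton, mul_zero]

lemma ContinuousOn.one_add_rpow {X : Type*} [TopologicalSpace X] {g : X → ℝ}
    {t : Set X} (hg : ContinuousOn g t) (hg0 : ∀ x ∈ t, 0 ≤ g x) (p : ℝ) :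
    ContinuousOn (fun x ↦ (1 + g x) ^ p) t :=
  (continuousOn_const.add hg).rpow_const fun x hx ↦
    Or.inl (add_pos_of_pos_of_nonneg one_pos (hg0 x hx)).ne'

namespace SacksUhlenbeck

noncomputable def defect (α s : ℝ) : ℝ :=
  -(1 + s) ^ α + 1 + α * (1 + s) ^ (α - 1) * s

variable {α s : ℝ}

lemma defect_eq_mul_rpow (hs : -1 < s) :
    defect α s = (-(1 + s) ^ 2 + (1 + s) ^ (2 - α) + α * (1 + s) * s) * (1 + s) ^ (α - 2) := by
  have hpos : 0 < 1 + s := by linarith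
  rw [defect, Real.rpow_sub hpos, Real.rpow_sub hpos, Real.rpow_sub hpos, Real.rpow_one,
    Real.rpow_two]
  field_simp

lemma defect_le (hα1 : 1 ≤ α) (hα2 : α ≤ 2) (hs : -1 < s) :
    defect α s ≤ (α - 1) * ((1 + s) ^ (α - 2) * s ^ 2) := by
  have hbernoulli : (1 + s) ^ (2 - α) ≤ 1 + (2 - α) * s :=
    rpow_one_add_le_one_add_mul_self hs.le (by linarith) (by linarith)
  have hquad : -(1 + s) ^ 2 + (1 + s) ^ (2 - α) + α * (1 + s) * s ≤ (α - 1) * s ^ 2 := by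
    nlinarith
  rw [defect_eq_mul_rpow hs]
  calc _ ≤ (α - 1) * s ^ 2 * (1 + s) ^ (α - 2) :=
        mul_le_mul_of_nonneg_right hquad (Real.rpow_nonneg (by linarith) _)
    _ = _ := by ring

lemma le_defect (hα1 : 1 ≤ α) (hα2 : α ≤ 2) (hs : 0 ≤ s) :
    α / 2 * (α - 1) * ((1 + s) ^ (α - 2) * s ^ 2) ≤ defect α s := by
  have hbernoulli : 1 + (2 - α) * s + (2 - α) * (2 - α - 1) / 2 * s ^ 2 ≤ (1 + s) ^ (2 - α) :=
    one_add_mul_self_add_mul_sq_le_rpow_one_add (by linarith) (by linarith) hs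
  have hquad : α / 2 * (α - 1) * s ^ 2 ≤ -(1 + s) ^ 2 + (1 + s) ^ (2 - α) + α * (1 + s) * s := by
    nlinarith
  rw [defect_eq_mul_rpow (by linarith)]
  calc _ = α / 2 * (α - 1) * s ^ 2 * (1 + s) ^ (α - 2) := by ring
    _ ≤ _ := mul_le_mul_of_nonneg_right hquad (Real.rpow_nonneg (by linarith) _)

lemma continuousOn_defect_comp {X : Type*} [TopologicalSpace X] {g : X → ℝ} {t : Set X}
    (hg : ContinuousOn g t) (hg0 : ∀ x ∈ t, 0 ≤ g x) (α : ℝ) :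
    ContinuousOn (fun x ↦ defect α (g x)) t := by
  have hpow := hg.one_add_rpow hg0
  exact ((hpow α).neg.add continuousOn_const).add ((continuousOn_const.mul (hpow (α - 1))).mul hg)

variable {X : Type*} [MeasurableSpace X] {μ : Measure X} {t : Set X} {g w : X → ℝ}

lemma mul_setIntegral_le_setIntegral_defect_mul_of_nonneg (hα1 : 1 ≤ α) (hα2 : α ≤ 2)
    (ht : MeasurableSet t) (hg0 : ∀ x ∈ t, 0 ≤ g x) (hw : ∀ x ∈ t, 0 ≤ w x)
    (hint : IntegrableOn (fun x ↦ (1 + g x) ^ (α - 2) * g x ^ 2 * w x) t μ)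
    (hint_defect : IntegrableOn (fun x ↦ defect α (g x) * w x) t μ) :
    α / 2 * (α - 1) * ∫ x in t, (1 + g x) ^ (α - 2) * g x ^ 2 * w x ∂μ ≤
      ∫ x in t, defect α (g x) * w x ∂μ := by
  rw [← integral_const_mul]
  refine setIntegral_mono_on (hint.const_mul _) hint_defect ht fun x hx ↦ ?_
  have := le_defect hα1 hα2 (hg0 x hx)
  nlinarith [hw x hx]

lemma mul_setIntegral_le_setIntegral_defect_mul_of_nonpos (hα1 : 1 ≤ α) (hα2 : α ≤ 2)
    (ht : MeasurableSet t) (hg : ∀ x ∈ t, -1 < g x) (hw : ∀ x ∈ t, w x ≤ 0)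
    (hint : IntegrableOn (fun x ↦ (1 + g x) ^ (α - 2) * g x ^ 2 * w x) t μ)
    (hint_defect : IntegrableOn (fun x ↦ defect α (g x) * w x) t μ) :
    (α - 1) * ∫ x in t, (1 + g x) ^ (α - 2) * g x ^ 2 * w x ∂μ ≤
      ∫ x in t, defect α (g x) * w x ∂μ := by
  rw [← integral_const_mul]
  refine setIntegral_mono_on (hint.const_mul _) hint_defect ht fun x hx ↦ ?_
  have := defect_le hα1 hα2 (hg x hx)
  nlinarith [hw x hx]

lemma weighted_le_of_setIntegral_defect_mul_eq_zero (hα1 : 1 < α) (hα2 : α ≤ 2)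
    (ht : MeasurableSet t) (hw : Measurable w) (hw0 : μ {x | w x = 0} = 0)
    (hg0 : ∀ x ∈ t, 0 ≤ g x)
    (hint : IntegrableOn (fun x ↦ (1 + g x) ^ (α - 2) * g x ^ 2 * w x) t μ)
    (hint_defect : IntegrableOn (fun x ↦ defect α (g x) * w x) t μ)
    (h : ∫ x in t, defect α (g x) * w x ∂μ = 0) :
    α / 2 * ∫ x in {x ∈ t | 0 < w x}, (1 + g x) ^ (α - 2) * g x ^ 2 * w x ∂μ ≤
      -∫ x in {x ∈ t | w x < 0}, (1 + g x) ^ (α - 2) * g x ^ 2 * w x ∂μ := by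
  have hpos_sub : {x ∈ t | 0 < w x} ⊆ t := fun x hx ↦ hx.1
  have hneg_sub : {x ∈ t | w x < 0} ⊆ t := fun x hx ↦ hx.1
  have hpos_meas : MeasurableSet {x ∈ t | 0 < w x} :=
    ht.inter (measurableSet_lt measurable_const hw)
  have hneg_meas : MeasurableSet {x ∈ t | w x < 0} :=
    ht.inter (measurableSet_lt hw measurable_const)
  have hupper := mul_setIntegral_le_setIntegral_defect_mul_of_nonneg hα1.le hα2 hpos_meas
    (fun x hx ↦ hg0 x hx.1) (fun x hx ↦ hx.2.le) (hint.mono_set hpos_sub)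
    (hint_defect.mono_set hpos_sub)
  have hlower := mul_setIntegral_le_setIntegral_defect_mul_of_nonpos hα1.le hα2 hneg_meas
    (fun x hx ↦ by linarith [hg0 x hx.1]) (fun x hx ↦ hx.2.le) (hint.mono_set hneg_sub)
    (hint_defect.mono_set hneg_sub)
  rw [setIntegral_eq_add_setIntegral_pos_neg ht hw hw0 hint_defect] at h
  have hsum : (α - 1) * (α / 2 * (∫ x in {x ∈ t | 0 < w x},
      (1 + g x) ^ (α - 2) * g x ^ 2 * w x ∂μ) + ∫ x in {x ∈ t | w x < 0},
      (1 + g x) ^ (α - 2) * g x ^ 2 * w x ∂μ) ≤ 0 := by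
    linear_combination hupper + hlower + h
  linarith [nonpos_of_mul_nonpos_right hsum (by linarith)]

end SacksUhlenbeck

lemma ContinuousOn.integrableOn_ball {X E : Type*} [PseudoMetricSpace X] [ProperSpace X]
    [MeasurableSpace X] [OpensMeasurableSpace X] [NormedAddCommGroup E] {μ : Measure X}
    [IsFiniteMeasureOnCompacts μ] {f : X → E} {x : X} {r : ℝ}
    (hf : ContinuousOn f (Metric.closedBall x r)) : IntegrableOn f (Metric.ball x r) μ :=
  (hf.integrableOn_compact' (isCompact_closedBall x r) Metric.isClosed_closedBall.measurableSet
    ).mono_set Metric.ball_subset_closedBall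

lemma gradSq_nonneg {K : ℕ} (u : ℂ → EuclideanSpace ℝ (Fin K)) (z : ℂ) : 0 ≤ gradSq u z := by
  unfold gradSq
  positivity

lemma ContDiffOn.continuousOn_gradSq {K : ℕ} {u : ℂ → EuclideanSpace ℝ (Fin K)} {V : Set ℂ}
    (hu : ContDiffOn ℝ 1 u V) (hV : IsOpen V) : ContinuousOn (gradSq u) V := by
  have hfderiv := hu.continuousOn_fderiv_of_isOpen hV le_rfl
  unfold gradSq
  fun_prop

open SacksUhlenbeck in
theorem stmt_9_general (K : ℕ) (u : ℂ → EuclideanSpace ℝ (Fin K)) (V : Set ℂ)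
    (hV : IsOpen V) (hDV : Metric.closedBall (0 : ℂ) 1 ⊆ V) (hu : ContDiffOn ℝ 1 u V)
    (α : ℝ) (hα1 : 1 < α) (hα2 : α ≤ 2)
    (h : (∫ z in Metric.ball (0 : ℂ) 1,
        (-(1 + gradSq u z) ^ α + 1 + α * (1 + gradSq u z) ^ (α - 1) * gradSq u z)
          * z.im) = 0) :
    (α / 2) * ∫ z in {z ∈ Metric.ball (0 : ℂ) 1 | 0 < z.im},
        (1 + gradSq u z) ^ (α - 2) * gradSq u z ^ 2 * z.im ≤
      -∫ z in {z ∈ Metric.ball (0 : ℂ) 1 | z.im < 0},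
        (1 + gradSq u z) ^ (α - 2) * gradSq u z ^ 2 * z.im := by
  have hg := (hu.continuousOn_gradSq hV).mono hDV
  have hg0 (z : ℂ) (_ : z ∈ Metric.closedBall 0 1) := gradSq_nonneg u z
  have him := Complex.continuous_im.continuousOn (s := Metric.closedBall 0 1)
  have hint_defect : IntegrableOn (fun z ↦ defect α (gradSq u z) * z.im) (Metric.ball 0 1) :=
    ((continuousOn_defect_comp hg hg0 α).mul him).integrableOn_ball
  have hint : IntegrableOn (fun z ↦ (1 + gradSq u z) ^ (α - 2) * gradSq u z ^ 2 * z.im)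
      (Metric.ball 0 1) :=
    (((hg.one_add_rpow hg0 (α - 2)).mul (hg.pow 2)).mul him).integrableOn_ball
  exact weighted_le_of_setIntegral_defect_mul_eq_zero hα1 hα2 measurableSet_ball
    Complex.measurable_im Complex.volume_setOf_im_eq_zero (fun z _ ↦ gradSq_nonneg u z) hint
    hint_defect h

/-- From the vanishing of `∫_D ( −(1+|∇u|²)^α + 1 + α(1+|∇u|²)^{α−1}|∇u|² )·Im z dA`
and the pointwise Sacks–Uhlenbeck bound one gets, for `1 < α ≤ 2`,
`(α/2)·∫_{D⁺} (1+|∇u|²)^{α−2}|∇u|⁴·Im z dA ≤ −∫_{D⁻} (1+|∇u|²)^{α−2}|∇u|⁴·Im z dA`. -/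
theorem stmt_9 (K : ℕ) (hK : 1 ≤ K) (u : ℂ → EuclideanSpace ℝ (Fin K)) (V : Set ℂ)
    (hV : IsOpen V) (hDV : Metric.closedBall (0 : ℂ) 1 ⊆ V) (hu : ContDiffOn ℝ 1 u V)
    (α : ℝ) (hα1 : 1 < α) (hα2 : α ≤ 2)
    (h : (∫ z in Metric.ball (0 : ℂ) 1,
        (-(1 + gradSq u z) ^ α + 1 + α * (1 + gradSq u z) ^ (α - 1) * gradSq u z)
          * z.im) = 0) :
    (α / 2) * ∫ z in {z ∈ Metric.ball (0 : ℂ) 1 | 0 < z.im},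
        (1 + gradSq u z) ^ (α - 2) * gradSq u z ^ 2 * z.im ≤
      -∫ z in {z ∈ Metric.ball (0 : ℂ) 1 | z.im < 0},
        (1 + gradSq u z) ^ (α - 2) * gradSq u z ^ 2 * z.im :=
  stmt_9_general K u V hV hDV hu α hα1 hα2 h
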